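/- arXiv:2605.04703 — 4 statements merged into one kernel-verified Lean document; each statement's English description precedes it below -/
import Mathlib

section
/- Small connection-range limit of the entropy integral: let K ⊆ ℝ^d be compact with Lebesgue measure 1, nonempty interior, and Lebesgue-null topological boundary, and let p : [0,∞) → [0,1] be measurable with ∫_{ℝ^d} h₂(p(‖v‖)) dv < ∞. Then lim_{r₀ → 0⁺} (1/r₀^d) ∬_{K×K} h₂(p(‖x−y‖/r₀)) dx dy = ∫_{ℝ^d} h₂(p(‖v‖)) dv. -/
/-!
Substituting `y = x + r • u` turns `r⁻ᵈ ∬_{K×K} g((y - x)/r)` into `∫ g(u) · c(r • u) du`, where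
`c(w) = vol (K ∩ (K - w))` is the covariogram of `K` (Fubini, then translation and dilation
invariance of Lebesgue measure). Since `c ≤ vol K = 1` and `c(w) → vol K` as `w → 0` (translation
is continuous in measure), dominated convergence gives the limit `∫ g`.
-/

open MeasureTheory Real Filter Set Module
open scoped ENNReal symmDiff Topology

/-- Binary entropy function (natural log, `0 log 0 = 0`). -/
noncomputable def h2 (t : ℝ) : ℝ := -(t * Real.log t) - (1 - t) * Real.log (1 - t)

noncomputable def covariogram {G : Type*} [Add G] [MeasurableSpace G] (μ : Measure G)
    (s : Set G) (v : G) : ℝ :=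
  μ.real (s ∩ (· + v) ⁻¹' s)

theorem covariogram_le {G : Type*} [Add G] [MeasurableSpace G] {μ : Measure G} {s : Set G}
    (hμs : μ s ≠ ∞) (v : G) : covariogram μ s v ≤ μ.real s :=
  measureReal_mono inter_subset_left hμs

section Fubini

variable {G : Type*} [AddCommGroup G] [MeasurableSpace G] [MeasurableAdd₂ G] {μ : Measure G}
  [SFinite μ] {s : Set G}

theorem measurable_covariogram (hs : MeasurableSet s) : Measurable (covariogram μ s) :=
  (measurable_measure_prodMk_right (μ := μ)
    ((measurable_fst hs).inter (measurable_add hs))).ennreal_toReal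

theorem setIntegral_setIntegral_sub_eq_integral_covariogram_mul [μ.IsAddRightInvariant]
    (hs : MeasurableSet s) (hμs : μ s ≠ ∞) {g : G → ℝ} (hg : Integrable g μ) :
    ∫ x in s, ∫ y in s, g (y - x) ∂μ ∂μ = ∫ v, covariogram μ s v * g v ∂μ := by
  let Φ : G → G → ℝ := fun x v ↦ ((· + v) ⁻¹' s).indicator (fun _ ↦ g v) x
  have hΦ : Integrable (Function.uncurry Φ) ((μ.restrict s).prod μ) := by
    have : IsFiniteMeasure (μ.restrict s) := isFiniteMeasure_restrict.2 hμs
    exact (hg.comp_snd (μ.restrict s)).indicator (measurable_add hs)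
  have inner (x : G) : ∫ y in s, g (y - x) ∂μ = ∫ v, Φ x v ∂μ := by
    rw [← integral_indicator hs, ← integral_add_right_eq_self _ x]
    congr 1 with v
    by_cases hv : v + x ∈ s <;> simp [Φ, hv, add_comm x v]
  calc ∫ x in s, ∫ y in s, g (y - x) ∂μ ∂μ
      = ∫ v, ∫ x in s, Φ x v ∂μ ∂μ := by
        simp_rw [inner]
        exact integral_integral_swap hΦ
    _ = ∫ v, covariogram μ s v * g v ∂μ := by
        congr 1 with v
        rw [setIntegral_indicator (measurable_add_const v hs), setIntegral_const, smul_eq_mul,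
          covariogram]

end Fubini

section Continuity

variable {G : Type*} [AddCommGroup G] [TopologicalSpace G] [IsTopologicalAddGroup G]
  [MeasurableSpace G] [BorelSpace G] {μ : Measure G} [μ.IsAddRightInvariant]
  [μ.InnerRegularCompactLTTop] [IsLocallyFiniteMeasure μ] {s : Set G}

theorem tendsto_measure_preimage_add_right_symmDiff (hs : NullMeasurableSet s μ)
    (hμs : μ s ≠ ∞) :
    Tendsto (fun w ↦ μ (((· + w) ⁻¹' s) ∆ s)) (𝓝 0) (𝓝 0) := by
  let translate : C(G, C(G, G)) := ContinuousMap.curry ⟨fun z ↦ z.2 + z.1, by fun_prop⟩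
  have h := tendsto_measure_symmDiff_preimage_nhds_zero (μ := μ) (ν := μ)
    (translate.continuous.tendsto 0) (.of_forall fun w ↦ measurePreserving_add_right μ w)
    (measurePreserving_add_right μ 0) hs hμs
  convert h using 4
  all_goals ext; simp [translate]

theorem tendsto_covariogram_nhds_zero (hs : NullMeasurableSet s μ) (hμs : μ s ≠ ∞) :
    Tendsto (covariogram μ s) (𝓝 0) (𝓝 (μ.real s)) := by
  have hsymm : Tendsto (fun w ↦ μ.real (((· + w) ⁻¹' s) ∆ s)) (𝓝 0) (𝓝 0) := by
    have := (ENNReal.tendsto_toReal ENNReal.zero_ne_top).comp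
      (tendsto_measure_preimage_add_right_symmDiff hs hμs)
    rwa [ENNReal.toReal_zero] at this
  refine tendsto_iff_dist_tendsto_zero.2 (squeeze_zero (fun _ ↦ dist_nonneg) (fun w ↦ ?_) hsymm)
  have hpre : NullMeasurableSet ((· + w) ⁻¹' s) μ :=
    hs.preimage (measurePreserving_add_right μ w).quasiMeasurePreserving
  have hμsymm : μ (((· + w) ⁻¹' s) ∆ s) ≠ ∞ := by
    refine ne_top_of_le_ne_top ?_
      ((measure_mono symmDiff_subset_union).trans (measure_union_le _ s))
    rw [measure_preimage_add_right]
    finiteness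
  rw [Real.dist_eq, covariogram, ← measureReal_inter_add_sdiff₀ hpre hμs, sub_add_cancel_left,
    abs_neg, abs_of_nonneg measureReal_nonneg]
  exact measureReal_mono (fun x hx ↦ Or.inr hx) hμsymm

end Continuity

section Rescaling

variable {E : Type*} [NormedAddCommGroup E] [NormedSpace ℝ E] [FiniteDimensional ℝ E]
  [MeasurableSpace E] [BorelSpace E] {μ : Measure E} [μ.IsAddHaarMeasure] {s : Set E}

theorem integral_integral_comp_inv_smul_sub_eq (hs : MeasurableSet s) (hμs : μ s ≠ ∞)
    {g : E → ℝ} (hg : Integrable g μ) {r : ℝ} (hr : 0 < r) :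
    (r ^ finrank ℝ E)⁻¹ * ∫ x in s, ∫ y in s, g (r⁻¹ • (y - x)) ∂μ ∂μ
      = ∫ u, covariogram μ s (r • u) * g u ∂μ := by
  rw [setIntegral_setIntegral_sub_eq_integral_covariogram_mul hs hμs
    (hg.comp_smul (inv_ne_zero hr.ne'))]
  have h := Measure.integral_comp_inv_smul_of_nonneg μ
    (fun u ↦ covariogram μ s (r • u) * g u) hr.le
  simp only [smul_inv_smul₀ hr.ne'] at h
  rw [h, smul_eq_mul, inv_mul_cancel_left₀ (pow_ne_zero _ hr.ne')]

theorem tendsto_integral_integral_comp_inv_smul_sub (hs : MeasurableSet s) (hμs : μ s ≠ ∞)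
    {g : E → ℝ} (hg : Integrable g μ) :
    Tendsto (fun r : ℝ ↦ (r ^ finrank ℝ E)⁻¹ * ∫ x in s, ∫ y in s, g (r⁻¹ • (y - x)) ∂μ ∂μ)
      (𝓝[>] 0) (𝓝 (μ.real s * ∫ v, g v ∂μ)) := by
  have hlim : Tendsto (fun r : ℝ ↦ ∫ u, covariogram μ s (r • u) * g u ∂μ) (𝓝[>] 0)
      (𝓝 (∫ u, μ.real s * g u ∂μ)) := by
    refine tendsto_integral_filter_of_dominated_convergence (fun u ↦ μ.real s * ‖g u‖)
      (.of_forall fun r ↦ ?_) (.of_forall fun r ↦ .of_forall fun u ↦ ?_)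
      (hg.norm.const_mul _) (.of_forall fun u ↦ ?_)
    · exact ((measurable_covariogram hs).comp (measurable_const_smul r)).aestronglyMeasurable.mul
        hg.aestronglyMeasurable
    · rw [norm_mul,
        Real.norm_of_nonneg (show 0 ≤ covariogram μ s (r • u) from measureReal_nonneg)]
      exact mul_le_mul_of_nonneg_right (covariogram_le hμs _) (norm_nonneg _)
    · have hsmul : Tendsto (fun r : ℝ ↦ r • u) (𝓝[>] 0) (𝓝 0) := by
        simpa using (tendsto_id.smul_const u).mono_left (nhdsWithin_le_nhds (a := (0 : ℝ)))
      exact ((tendsto_covariogram_nhds_zero hs.nullMeasurableSet hμs).comp hsmul).mul_const _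
  rw [integral_const_mul] at hlim
  refine hlim.congr' ?_
  filter_upwards [self_mem_nhdsWithin] with r hr
  exact (integral_integral_comp_inv_smul_sub_eq hs hμs hg hr).symm

end Rescaling

theorem small_range_entropy_integral_limit_general
    (d : ℕ)
    (K : Set (EuclideanSpace ℝ (Fin d)))
    (hK_compact : IsCompact K) (hK_vol : volume K = 1)
    (p : ℝ → ℝ)
    (hstar_int : Integrable (fun v : EuclideanSpace ℝ (Fin d) => h2 (p ‖v‖))) :
    Tendsto
      (fun r₀ : ℝ => (1 / r₀ ^ d) * ∫ x in K, ∫ y in K, h2 (p (dist x y / r₀)))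
      (nhdsWithin 0 (Set.Ioi 0))
      (nhds (∫ v : EuclideanSpace ℝ (Fin d), h2 (p ‖v‖))) := by
  have h := tendsto_integral_integral_comp_inv_smul_sub hK_compact.isClosed.measurableSet
    (by simp [hK_vol]) hstar_int
  rw [measureReal_def, hK_vol, ENNReal.toReal_one, one_mul, finrank_euclideanSpace_fin] at h
  refine h.congr' ?_
  filter_upwards [self_mem_nhdsWithin] with r (hr : 0 < r)
  have hnorm (x y : EuclideanSpace ℝ (Fin d)) : ‖r⁻¹ • (y - x)‖ = dist x y / r := by
    rw [norm_smul, norm_inv, Real.norm_of_nonneg hr.le, dist_comm, dist_eq_norm, inv_mul_eq_div]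
  simp only [hnorm, one_div]

/-- **Small connection-range limit of the entropy integral.**
`lim_{r₀→0⁺} (1/r₀^d) ∬_{K×K} h₂(p(‖x−y‖/r₀)) dx dy = ∫_{ℝ^d} h₂(p(‖v‖)) dv`. -/
theorem small_range_entropy_integral_limit
    (d : ℕ)
    (K : Set (EuclideanSpace ℝ (Fin d)))
    (hK_compact : IsCompact K) (hK_vol : volume K = 1)
    (hK_int : (interior K).Nonempty) (hK_bd : volume (frontier K) = 0)
    (p : ℝ → ℝ) (hp_meas : Measurable p)
    (hp_range : ∀ r : ℝ, 0 ≤ r → p r ∈ Set.Icc (0 : ℝ) 1)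
    (hstar_int : Integrable (fun v : EuclideanSpace ℝ (Fin d) => h2 (p ‖v‖))) :
    Tendsto
      (fun r₀ : ℝ => (1 / r₀ ^ d) * ∫ x in K, ∫ y in K, h2 (p (dist x y / r₀)))
      (nhdsWithin 0 (Set.Ioi 0))
      (nhds (∫ v : EuclideanSpace ℝ (Fin d), h2 (p ‖v‖))) :=
  small_range_entropy_integral_limit_general d K hK_compact hK_vol p hstar_int
end

section
/- For all x, y ∈ [0,1], |h₂(x) − h₂(y)| ≤ h₂(|x − y|). -/
/-!
A concave function `f` on an interval containing `0` with `f 0 ≥ 0` satisfies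
`t f(x) ≤ f(t x)` for `t ∈ [0,1]`, hence is subadditive on nonnegative arguments; the binary
entropy is such a function on `[0,1]`. For `y ≤ x` this gives `h₂(x) ≤ h₂(y) + h₂(x - y)`, and,
applied to `1 - y = (1 - x) + (x - y)` together with the symmetry `h₂(1 - t) = h₂(t)`, also
`h₂(y) ≤ h₂(x) + h₂(x - y)`.
-/

open Real

theorem h2_eq_binEntropy (t : ℝ) : h2 t = binEntropy t := by
  simp only [h2, binEntropy_eq_negMulLog_add_negMulLog_one_sub, negMulLog]
  ring

namespace ConcaveOn

theorem mul_le_apply_smul {E : Type*} [AddCommGroup E] [Module ℝ E] {s : Set E} {f : E → ℝ}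
    (hf : ConcaveOn ℝ s f) (h0 : 0 ∈ s) (hf0 : 0 ≤ f 0) {x : E}
    (hx : x ∈ s) {t : ℝ} (ht0 : 0 ≤ t) (ht1 : t ≤ 1) : t * f x ≤ f (t • x) := by
  have h := hf.2 hx h0 ht0 (sub_nonneg.2 ht1) (add_sub_cancel t 1)
  simp only [smul_zero, add_zero, smul_eq_mul] at h
  linarith [mul_nonneg (sub_nonneg.2 ht1) hf0]

theorem apply_add_le {s : Set ℝ} {f : ℝ → ℝ} (hf : ConcaveOn ℝ s f) (h0 : 0 ∈ s)
    (hf0 : 0 ≤ f 0) {a b : ℝ} (ha : 0 ≤ a) (hb : 0 ≤ b) (hab : a + b ∈ s) :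
    f (a + b) ≤ f a + f b := by
  rcases (add_nonneg ha hb).eq_or_lt with hzero | hpos
  · obtain ⟨rfl, rfl⟩ : a = 0 ∧ b = 0 := ⟨by linarith, by linarith⟩
    simpa using hf0
  have hscale {c : ℝ} (hc : 0 ≤ c) (hcab : c ≤ a + b) : c / (a + b) * f (a + b) ≤ f c := by
    have h := hf.mul_le_apply_smul h0 hf0 hab (div_nonneg hc hpos.le)
      ((div_le_one hpos).2 hcab)
    rwa [smul_eq_mul, div_mul_cancel₀ c hpos.ne'] at h
  calc f (a + b) = a / (a + b) * f (a + b) + b / (a + b) * f (a + b) := by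
        rw [← add_mul, ← add_div, div_self hpos.ne', one_mul]
    _ ≤ f a + f b :=
        add_le_add (hscale ha (le_add_of_nonneg_right hb)) (hscale hb (le_add_of_nonneg_left ha))

end ConcaveOn

theorem binEntropy_add_le {a b : ℝ} (ha : 0 ≤ a) (hb : 0 ≤ b) (hab : a + b ≤ 1) :
    binEntropy (a + b) ≤ binEntropy a + binEntropy b :=
  strictConcave_binEntropy.concaveOn.apply_add_le (by simp) (by simp) ha hb
    ⟨add_nonneg ha hb, hab⟩

theorem abs_binEntropy_sub_binEntropy_le {x y : ℝ} (hx : x ∈ Set.Icc (0 : ℝ) 1)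
    (hy : y ∈ Set.Icc (0 : ℝ) 1) : |binEntropy x - binEntropy y| ≤ binEntropy |x - y| := by
  wlog hyx : y ≤ x generalizing x y
  · rw [abs_sub_comm, abs_sub_comm x]
    exact this hy hx (le_of_not_ge hyx)
  have hd : 0 ≤ x - y := sub_nonneg.2 hyx
  rw [abs_of_nonneg hd, abs_sub_le_iff]
  constructor
  · have h := binEntropy_add_le hy.1 hd (by linarith [hx.2])
    rw [add_sub_cancel] at h
    linarith
  · have h := binEntropy_add_le (sub_nonneg.2 hx.2) hd (by linarith [hy.1])
    rw [sub_add_sub_cancel, binEntropy_one_sub, binEntropy_one_sub] at h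
    linarith

/-- For all `x, y ∈ [0,1]`, `|h₂(x) − h₂(y)| ≤ h₂(|x − y|)`. -/
theorem abs_h2_sub_h2_le
    (x y : ℝ) (hx : x ∈ Set.Icc (0 : ℝ) 1) (hy : y ∈ Set.Icc (0 : ℝ) 1) :
    |h2 x - h2 y| ≤ h2 |x - y| := by
  simp only [h2_eq_binEntropy]
  exact abs_binEntropy_sub_binEntropy_le hx hy
end

section
/- Absolute log-likelihood-ratio bound: let P and Q be probability mass functions on a finite type with Q(x) > 0 whenever P(x) > 0. Then Σ_x P(x)·|log(P(x)/Q(x))| ≤ Σ_x P(x)·log(P(x)/Q(x)) + 2/e, where the sums range over x with P(x) > 0. -/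
/-! For each `x` with `P x > 0`, `|log r| = log r + 2 · max 0 (-log r)` with `r = P x / Q x`, and
`P x · log (Q x / P x) ≤ Q x / e` because `log t ≤ t / e` (the tangent line of `log` through the
origin touches at `t = e`). Summing, the extra mass is at most `(2 / e) · Σ Q ≤ 2 / e`. -/

open Real Finset

lemma Real.log_le_div_exp_one {t : ℝ} (ht : 0 < t) : log t ≤ t / exp 1 := by
  rw [le_div_iff₀ (exp_pos 1), mul_comm]
  simpa only [exp_log ht] using exp_one_mul_le_exp (x := log t)

lemma Real.mul_log_div_le_div_exp_one {p q : ℝ} (hp : 0 < p) (hq : 0 < q) :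
    p * log (q / p) ≤ q / exp 1 :=
  calc p * log (q / p) ≤ p * (q / p / exp 1) :=
        mul_le_mul_of_nonneg_left (log_le_div_exp_one (div_pos hq hp)) hp.le
    _ = q / exp 1 := by field_simp

lemma Real.mul_abs_log_div_le {p q : ℝ} (hp : 0 < p) (hq : 0 < q) :
    p * |log (p / q)| ≤ p * log (p / q) + 2 * (q / exp 1) := by
  rcases le_or_gt 0 (log (p / q)) with hnonneg | hneg
  · rw [abs_of_nonneg hnonneg]
    have : 0 ≤ q / exp 1 := by positivity
    linarith
  · have hflip : log (q / p) = -log (p / q) := by rw [← log_inv, inv_div]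
    have := mul_log_div_le_div_exp_one hp hq
    rw [hflip] at this
    rw [abs_of_neg hneg]
    linarith

theorem abs_log_likelihood_ratio_bound_general
    {α : Type*} [Fintype α]
    (P Q : α → ℝ)
    (hQ_nonneg : ∀ x, 0 ≤ Q x) (hQ_sum : ∑ x, Q x = 1)
    (hPQ : ∀ x, 0 < P x → 0 < Q x) :
    ∑ x ∈ Finset.univ.filter (fun x => 0 < P x), P x * |Real.log (P x / Q x)|
      ≤ (∑ x ∈ Finset.univ.filter (fun x => 0 < P x), P x * Real.log (P x / Q x))
        + 2 / Real.exp 1 := by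
  set S := univ.filter (fun x => 0 < P x)
  have hQ_S : ∑ x ∈ S, Q x ≤ 1 :=
    hQ_sum ▸ sum_le_univ_sum_of_nonneg fun x => hQ_nonneg x
  calc ∑ x ∈ S, P x * |log (P x / Q x)|
      ≤ ∑ x ∈ S, (P x * log (P x / Q x) + 2 * (Q x / exp 1)) := by
        refine sum_le_sum fun x hx => ?_
        have hPx : 0 < P x := (mem_filter.mp hx).2
        exact mul_abs_log_div_le hPx (hPQ x hPx)
    _ = ∑ x ∈ S, P x * log (P x / Q x) + 2 / exp 1 * ∑ x ∈ S, Q x := by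
        rw [sum_add_distrib, mul_sum]
        congr 1
        exact sum_congr rfl fun x _ => by ring
    _ ≤ ∑ x ∈ S, P x * log (P x / Q x) + 2 / exp 1 := by
        gcongr
        exact mul_le_of_le_one_right (by positivity) hQ_S

/-- **Absolute log-likelihood-ratio bound.** For pmfs `P, Q` on a finite type with
`Q` positive wherever `P` is, `Σ_x P(x)|log(P(x)/Q(x))| ≤ Σ_x P(x) log(P(x)/Q(x)) + 2/e`,
the sums ranging over `x` with `P(x) > 0`. -/
theorem abs_log_likelihood_ratio_bound
    {α : Type*} [Fintype α]
    (P Q : α → ℝ)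
    (hP_nonneg : ∀ x, 0 ≤ P x) (hP_sum : ∑ x, P x = 1)
    (hQ_nonneg : ∀ x, 0 ≤ Q x) (hQ_sum : ∑ x, Q x = 1)
    (hPQ : ∀ x, 0 < P x → 0 < Q x) :
    ∑ x ∈ Finset.univ.filter (fun x => 0 < P x), P x * |Real.log (P x / Q x)|
      ≤ (∑ x ∈ Finset.univ.filter (fun x => 0 < P x), P x * Real.log (P x / Q x))
        + 2 / Real.exp 1 :=
  abs_log_likelihood_ratio_bound_general P Q hQ_nonneg hQ_sum hPQ
end

section
/- Scaling limit of radial pair integrals: let K ⊆ ℝ^d be compact with Lebesgue-null topological boundary, and let g : [0,∞) → [0,∞) be measurable with ∫_{ℝ^d} g(‖v‖) dv < ∞. Then lim_{s → 0⁺} (1/s^d) ∬_{K×K} g(‖x−y‖/s) dx dy = λ(K) · ∫_{ℝ^d} g(‖v‖) dv, where λ denotes Lebesgue measure. -/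
/-!
Substituting `y = x - s • v` turns `s⁻ᵈ ∬_{K×K} g(‖x - y‖ / s)` into the integral of
`𝟙_K(x - s • v) g(‖v‖)` over `K × ℝᵈ`. For `x` in the interior of `K` the indicator is `1` once
`s` is small, and since `∂K` is null this holds for almost every `x ∈ K`; dominated convergence
with the integrable bound `|g(‖v‖)|` gives the limit `λ(K) ∫ g(‖v‖) dv`.
-/

open MeasureTheory Filter Topology Module ENNReal

section ScaledPairIntegral

variable {E : Type*} [NormedAddCommGroup E] [NormedSpace ℝ E]

lemma eventually_sub_smul_mem_of_mem_interior {K : Set E} {x : E} (hx : x ∈ interior K) (v : E) :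
    ∀ᶠ s in 𝓝 (0 : ℝ), x - s • v ∈ K := by
  have hcont : Tendsto (fun s : ℝ => x - s • v) (𝓝 0) (𝓝 x) :=
    (continuous_const.sub (continuous_id.smul continuous_const)).tendsto' 0 x (by simp)
  exact (hcont.eventually (isOpen_interior.mem_nhds hx)).mono fun _ h => interior_subset h

variable [MeasurableSpace E] [BorelSpace E] {K : Set E} {φ : E → ℝ}

section Convergence

variable [SecondCountableTopology E] {μ ν : Measure E}

lemma integrable_indicator_sub_smul_mul [SFinite ν] (hK : MeasurableSet K) (hKμ : μ K ≠ ∞)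
    (hφ : Integrable φ ν) (s : ℝ) :
    Integrable (fun p : E × E => K.indicator 1 (p.1 - s • p.2) * φ p.2) ((μ.restrict K).prod ν) := by
  have : IsFiniteMeasure (μ.restrict K) := isFiniteMeasure_restrict.2 hKμ
  have hmeas : Measurable fun p : E × E => K.indicator (1 : E → ℝ) (p.1 - s • p.2) :=
    (measurable_one.indicator hK).comp (measurable_fst.sub (measurable_snd.const_smul s))
  refine (hφ.comp_snd _).mono (hmeas.aestronglyMeasurable.mul (hφ.comp_snd _).1) ?_
  refine ae_of_all _ fun p => ?_
  by_cases hp : p.1 - s • p.2 ∈ K <;> simp [hp]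

lemma tendsto_integral_indicator_sub_smul_mul [SFinite ν] (hK : MeasurableSet K) (hKμ : μ K ≠ ∞)
    (hfr : μ (frontier K) = 0) (hφ : Integrable φ ν) :
    Tendsto (fun s : ℝ => ∫ p, K.indicator 1 (p.1 - s • p.2) * φ p.2 ∂(μ.restrict K).prod ν)
      (𝓝 0) (𝓝 ((μ K).toReal * ∫ v, φ v ∂ν)) := by
  have : IsFiniteMeasure (μ.restrict K) := isFiniteMeasure_restrict.2 hKμ
  have hinterior : ∀ᵐ x ∂μ.restrict K, x ∈ interior K := by
    rw [ae_restrict_iff' hK]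
    refine measure_mono_null (fun x hx => ?_) hfr
    obtain ⟨hxK, hxint⟩ := Classical.not_imp.1 hx
    exact ⟨subset_closure hxK, hxint⟩
  have hlim : ∀ᵐ p ∂(μ.restrict K).prod ν,
      Tendsto (fun s : ℝ => K.indicator 1 (p.1 - s • p.2) * φ p.2) (𝓝 0) (𝓝 (φ p.2)) := by
    filter_upwards [Measure.quasiMeasurePreserving_fst.ae hinterior] with p hp
    refine tendsto_const_nhds.congr' ?_
    filter_upwards [eventually_sub_smul_mem_of_mem_interior hp p.2] with s hs
    simp [hs]
  have hvalue : ∫ p, φ p.2 ∂(μ.restrict K).prod ν = (μ K).toReal * ∫ v, φ v ∂ν := by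
    rw [integral_fun_snd, measureReal_def, Measure.restrict_apply_univ, smul_eq_mul]
  rw [← hvalue]
  refine tendsto_integral_filter_of_dominated_convergence (fun p => ‖φ p.2‖)
    (.of_forall fun s => (integrable_indicator_sub_smul_mul hK hKμ hφ s).1)
    (.of_forall fun s => ae_of_all _ fun p => ?_) (hφ.comp_snd _).norm hlim
  by_cases hp : p.1 - s • p.2 ∈ K <;> simp [hp]

end Convergence

section Translation

variable [FiniteDimensional ℝ E] (μ : Measure E) [μ.IsAddHaarMeasure]

lemma setIntegral_comp_inv_smul_sub (hK : MeasurableSet K) (φ : E → ℝ) (x : E) {s : ℝ}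
    (hs : s ≠ 0) :
    ∫ y in K, φ (s⁻¹ • (x - y)) ∂μ
      = |s| ^ finrank ℝ E * ∫ v, K.indicator 1 (x - s • v) * φ v ∂μ := by
  have hindicator : ∀ y, K.indicator (fun y => φ (s⁻¹ • (x - y))) y
      = K.indicator 1 (x - (x - y)) * φ (s⁻¹ • (x - y)) := fun y => by
    by_cases hy : y ∈ K <;> simp [hy]
  rw [← integral_indicator hK, funext hindicator,
    integral_sub_left_eq_self (fun z => K.indicator 1 (x - z) * φ (s⁻¹ • z)) μ x,
    ← abs_pow, ← smul_eq_mul, ← Measure.integral_comp_inv_smul μ _ s]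
  simp only [smul_inv_smul₀ hs]

lemma integral_setIntegral_comp_inv_smul_sub (hK : MeasurableSet K) (hKμ : μ K ≠ ∞)
    (hφ : Integrable φ μ) {s : ℝ} (hs : s ≠ 0) :
    ∫ x in K, ∫ y in K, φ (s⁻¹ • (x - y)) ∂μ ∂μ
      = |s| ^ finrank ℝ E * ∫ p, K.indicator 1 (p.1 - s • p.2) * φ p.2 ∂(μ.restrict K).prod μ := by
  simp_rw [setIntegral_comp_inv_smul_sub μ hK φ _ hs, integral_const_mul]
  rw [integral_integral (integrable_indicator_sub_smul_mul hK hKμ hφ s)]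

end Translation

end ScaledPairIntegral

theorem radial_pair_integral_scaling_limit_general
    (d : ℕ)
    (K : Set (EuclideanSpace ℝ (Fin d)))
    (hK_compact : IsCompact K) (hK_bd : volume (frontier K) = 0)
    (g : ℝ → ℝ)
    (hg_int : Integrable (fun v : EuclideanSpace ℝ (Fin d) => g ‖v‖)) :
    Tendsto
      (fun s : ℝ => (1 / s ^ d) * ∫ x in K, ∫ y in K, g (dist x y / s))
      (nhdsWithin 0 (Set.Ioi 0))
      (nhds ((volume K).toReal * ∫ v : EuclideanSpace ℝ (Fin d), g ‖v‖)) := by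
  have hK := hK_compact.isClosed.measurableSet
  have hKμ : volume K ≠ ⊤ := hK_compact.measure_lt_top.ne
  refine ((tendsto_integral_indicator_sub_smul_mul hK hKμ hK_bd hg_int).mono_left
    nhdsWithin_le_nhds).congr' ?_
  filter_upwards [self_mem_nhdsWithin] with s (hs : 0 < s)
  have hradial : ∀ x y : EuclideanSpace ℝ (Fin d), g (dist x y / s) = g ‖s⁻¹ • (x - y)‖ := by
    intro x y
    rw [norm_smul, norm_inv, Real.norm_of_nonneg hs.le, dist_eq_norm, inv_mul_eq_div]
  simp_rw [hradial]
  rw [integral_setIntegral_comp_inv_smul_sub volume hK hKμ hg_int hs.ne', finrank_euclideanSpace_fin,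
    abs_of_pos hs]
  field_simp

/-- **Scaling limit of radial pair integrals.** For compact `K ⊆ ℝ^d` with Lebesgue-null
boundary and `g : [0,∞) → [0,∞)` with `∫_{ℝ^d} g(‖v‖) dv < ∞`,
`lim_{s→0⁺} (1/s^d) ∬_{K×K} g(‖x−y‖/s) dx dy = λ(K) · ∫_{ℝ^d} g(‖v‖) dv`. -/
theorem radial_pair_integral_scaling_limit
    (d : ℕ)
    (K : Set (EuclideanSpace ℝ (Fin d)))
    (hK_compact : IsCompact K) (hK_bd : volume (frontier K) = 0)
    (g : ℝ → ℝ) (hg_meas : Measurable g)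
    (hg_nonneg : ∀ r : ℝ, 0 ≤ r → 0 ≤ g r)
    (hg_int : Integrable (fun v : EuclideanSpace ℝ (Fin d) => g ‖v‖)) :
    Tendsto
      (fun s : ℝ => (1 / s ^ d) * ∫ x in K, ∫ y in K, g (dist x y / s))
      (nhdsWithin 0 (Set.Ioi 0))
      (nhds ((volume K).toReal * ∫ v : EuclideanSpace ℝ (Fin d), g ‖v‖)) :=
  radial_pair_integral_scaling_limit_general d K hK_compact hK_bd g hg_int
end
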